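/- arXiv:2008.01256 — 2 statements merged into one kernel-verified Lean document; each statement's English description precedes it below -/
import Mathlib

section
/- Let h ∈ ℝ[x]_{2d} be s.o.s-convex and let L : ℝ[x]_{2d} → ℝ be a linear functional satisfying L(1) = 1 and L(σ) ≥ 0 for every sum of squares σ of degree at most 2d. Then L(h) ≥ h(L(x_1),...,L(x_m)). -/
/-!
Along the segment `t ↦ a + t (x - a)`, with `a = (L x₁, …, L xₘ)`, Taylor's formula with integral
remainder gives `h = h(a) + ∇h(a) · (x - a) + ∫₀¹ (1 - t) (x - a)ᵀ ∇²h(a + t (x - a)) (x - a) dt`.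
If `∇²h = Hᵀ H`, the integrand is `(1 - t) ∑ₖ qₖ(t)²` with `qₖ ∈ ℝ[x][t]`, and because the Hankel
matrix of the moments `∫₀¹ (1 - t) tⁿ dt` is positive semidefinite, `∫₀¹ (1 - t) q(t)² dt` is a sum
of squares in `ℝ[x]`. The remainder is therefore a sum of squares of degree at most `deg h`, and
`L` maps the affine part to `h(a)`, so `L h = h(a) + L(remainder) ≥ h(a)`.
-/

open MvPolynomial

/-- A polynomial is s.o.s-convex if its Hessian matrix is `H(x)ᵀ H(x)` for some
polynomial matrix `H`. -/
def SosConvex {m : ℕ} (h : MvPolynomial (Fin m) ℝ) : Prop :=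
  ∃ (r : ℕ) (H : Matrix (Fin r) (Fin m) (MvPolynomial (Fin m) ℝ)),
    ∀ i j : Fin m, pderiv i (pderiv j h) = ∑ k : Fin r, H k i * H k j

open scoped Polynomial Matrix

noncomputable section

theorem Matrix.PosSemidef.isSumSq_sum_smul_mul {ι A : Type*} [Fintype ι] [CommSemiring A]
    [Algebra ℝ A] {M : Matrix ι ι ℝ} (hM : M.PosSemidef) (q : ι → A) :
    IsSumSq (∑ i, ∑ j, M i j • (q i * q j)) := by
  obtain ⟨n, v, rfl⟩ := Matrix.posSemidef_iff_eq_sum_vecMulVec.mp hM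
  have gram : ∑ i, ∑ j, (∑ k, Matrix.vecMulVec (v k) (star (v k))) i j • (q i * q j) =
      ∑ k, (∑ i, v k i • q i) * (∑ j, v k j • q j) := by
    simp only [Finset.sum_mul_sum, Matrix.sum_apply, Matrix.vecMulVec_apply, star_trivial,
      Finset.sum_smul, smul_mul_smul_comm]
    exact (Finset.sum_congr rfl fun _ _ => Finset.sum_comm).trans Finset.sum_comm
  rw [gram]
  exact IsSumSq.sum_mul_self _ _

def taylorWeight (n : ℕ) : ℝ := ((n + 1 : ℝ) * (n + 2))⁻¹

theorem integral_one_sub_mul_pow (n : ℕ) :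
    ∫ t in (0 : ℝ)..1, (1 - t) * t ^ n = taylorWeight n := by
  simp_rw [sub_mul, one_mul, ← pow_succ']
  rw [intervalIntegral.integral_sub (by simp) (by simp), integral_pow, integral_pow,
    taylorWeight]
  field_simp
  push_cast
  ring

theorem posSemidef_taylorWeight_hankel (N : ℕ) :
    (Matrix.of fun i j : Fin N => taylorWeight (i + j)).PosSemidef := by
  refine .of_dotProduct_mulVec_nonneg (by ext i j; simp [add_comm]) fun x => ?_
  have integrand (t : ℝ) : (1 - t) * (∑ i : Fin N, x i * t ^ (i : ℕ)) ^ 2 =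
      ∑ i : Fin N, ∑ j : Fin N, x i * ((1 - t) * t ^ ((i : ℕ) + j) * x j) := by
    rw [sq, Finset.sum_mul_sum, Finset.mul_sum]
    refine Finset.sum_congr rfl fun _ _ => ?_
    rw [Finset.mul_sum]
    exact Finset.sum_congr rfl fun _ _ => by ring
  have quadratic_form : star x ⬝ᵥ (Matrix.of fun i j : Fin N => taylorWeight (i + j)) *ᵥ x =
      ∫ t in (0 : ℝ)..1, (1 - t) * (∑ i : Fin N, x i * t ^ (i : ℕ)) ^ 2 := by
    simp only [integrand, dotProduct, Matrix.mulVec, Matrix.of_apply, star_trivial,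
      Finset.mul_sum]
    rw [intervalIntegral.integral_finsetSum fun _ _ =>
      Continuous.intervalIntegrable (by fun_prop) _ _]
    refine Finset.sum_congr rfl fun _ _ => ?_
    rw [intervalIntegral.integral_finsetSum fun _ _ =>
      Continuous.intervalIntegrable (by fun_prop) _ _]
    refine Finset.sum_congr rfl fun _ _ => ?_
    rw [intervalIntegral.integral_const_mul, intervalIntegral.integral_mul_const,
      integral_one_sub_mul_pow]
  rw [quadratic_form]
  refine intervalIntegral.integral_nonneg zero_le_one fun t ht => ?_
  have : 0 ≤ 1 - t := sub_nonneg.mpr ht.2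
  positivity

namespace Polynomial

variable {A : Type*}

/-- The formal integral `∫₀¹ (1 - t) p(t) dt`, taken coefficientwise. -/
def taylorIntegral [Semiring A] [Module ℝ A] : A[X] →ₗ[ℝ] A :=
  lsum fun n => taylorWeight n • LinearMap.id

theorem taylorIntegral_monomial [Semiring A] [Module ℝ A] (n : ℕ) (c : A) :
    taylorIntegral (monomial n c) = taylorWeight n • c := by
  simp [taylorIntegral, lsum_apply]

theorem eval_one_eq_add_taylorIntegral [Semiring A] [Module ℝ A] (p : A[X]) :
    p.eval 1 = p.eval 0 + (derivative p).eval 0 + taylorIntegral (derivative (derivative p)) := by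
  induction p using Polynomial.induction_on' with
  | add p q hp hq => simp only [eval_add, map_add, hp, hq]; abel
  | monomial n c =>
    rcases n with _ | _ | n
    · simp
    · simp
    · simp only [eval_monomial, one_pow, mul_one, derivative_monomial, taylorIntegral_monomial]
      have weight_mul : taylorWeight n * ((n + 1 + 1 : ℕ) * (n + 1 : ℕ) : ℝ) = 1 := by
        rw [taylorWeight]; push_cast; field_simp; ring
      simp only [Nat.add_sub_cancel, zero_pow (Nat.succ_ne_zero _), mul_zero, zero_add]
      rw [mul_assoc, ← Nat.cast_mul, ← nsmul_eq_mul', ← Nat.cast_smul_eq_nsmul ℝ, smul_smul,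
        Nat.cast_mul, weight_mul, one_smul]

theorem isSumSq_taylorIntegral_mul_self [CommSemiring A] [Algebra ℝ A] (Q : A[X]) :
    IsSumSq (taylorIntegral (Q * Q)) := by
  set N := Q.natDegree + 1
  have hQ : Q = ∑ i : Fin N, monomial i (Q.coeff i) := by
    rw [Fin.sum_univ_eq_sum_range (fun i => monomial i (Q.coeff i)), ← Q.as_sum_range]
  have moments : taylorIntegral (Q * Q) =
      ∑ i : Fin N, ∑ j : Fin N, taylorWeight (i + j) • (Q.coeff i * Q.coeff j) := by
    conv_lhs => rw [hQ]
    simp only [Finset.sum_mul_sum, monomial_mul_monomial, map_sum, taylorIntegral_monomial]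
  rw [moments]
  exact (posSemidef_taylorWeight_hankel N).isSumSq_sum_smul_mul fun i => Q.coeff i

end Polynomial

namespace MvPolynomial

variable {σ R : Type*}

theorem derivative_aeval [Fintype σ] [CommSemiring R] {A : Type*} [CommSemiring A] [Algebra R A]
    (f : σ → A[X]) (p : MvPolynomial σ R) :
    Polynomial.derivative (aeval f p) =
      ∑ i, aeval f (pderiv i p) * Polynomial.derivative (f i) := by
  classical
  induction p using MvPolynomial.induction_on with
  | C r => simp [Polynomial.algebraMap_apply]
  | add p q hp hq => simp [hp, hq, add_mul, Finset.sum_add_distrib]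
  | mul_X p j hp =>
    simp only [map_mul, aeval_X, Polynomial.derivative_mul, hp, pderiv_mul, pderiv_X, map_add,
      add_mul, Finset.sum_add_distrib, Finset.sum_mul]
    congr 1
    · exact Finset.sum_congr rfl fun i _ => by ring
    · simp [Pi.single_apply]

variable [CommRing R]

/-- `p ↦ p(a + t (x - a))`, a polynomial in `t` with coefficients in `R[x]`. -/
def restrictSegment (a : σ → R) : MvPolynomial σ R →ₐ[R] (MvPolynomial σ R)[X] :=
  aeval fun i => Polynomial.C (C (a i)) + Polynomial.C (X i - C (a i)) * Polynomial.X

theorem eval_one_restrictSegment (a : σ → R) (p : MvPolynomial σ R) :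
    (restrictSegment a p).eval 1 = p := by
  induction p using MvPolynomial.induction_on with
  | C r => simp [restrictSegment, Polynomial.algebraMap_apply]
  | add p q hp hq => simp [hp, hq]
  | mul_X p i hp => rw [map_mul, Polynomial.eval_mul, hp]; simp [restrictSegment]

theorem eval_zero_restrictSegment (a : σ → R) (p : MvPolynomial σ R) :
    (restrictSegment a p).eval 0 = C (eval a p) := by
  induction p using MvPolynomial.induction_on with
  | C r => simp [restrictSegment, Polynomial.algebraMap_apply]
  | add p q hp hq => simp [hp, hq]
  | mul_X p i hp => rw [map_mul, Polynomial.eval_mul, hp]; simp [restrictSegment]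

theorem derivative_restrictSegment [Fintype σ] (a : σ → R) (p : MvPolynomial σ R) :
    Polynomial.derivative (restrictSegment a p) =
      ∑ i, restrictSegment a (pderiv i p) * Polynomial.C (X i - C (a i)) := by
  simp [restrictSegment, derivative_aeval]

theorem derivative_derivative_restrictSegment [Fintype σ] {ι : Type*} [Fintype ι] (a : σ → R)
    {p : MvPolynomial σ R} (H : ι → σ → MvPolynomial σ R)
    (hH : ∀ i j, pderiv i (pderiv j p) = ∑ k, H k i * H k j) :
    Polynomial.derivative (Polynomial.derivative (restrictSegment a p)) =
      ∑ k, (∑ i, restrictSegment a (H k i) * Polynomial.C (X i - C (a i))) *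
        (∑ i, restrictSegment a (H k i) * Polynomial.C (X i - C (a i))) := by
  simp only [derivative_restrictSegment, Polynomial.derivative_mul,
    Polynomial.derivative_C, mul_zero, add_zero, hH, map_sum, map_mul, Finset.sum_mul,
    Finset.mul_sum]
  rw [Finset.sum_comm]
  refine (Finset.sum_congr rfl fun _ _ => Finset.sum_comm).trans ?_
  rw [Finset.sum_comm]
  exact Finset.sum_congr rfl fun _ _ => Finset.sum_congr rfl fun _ _ =>
    Finset.sum_congr rfl fun _ _ => by ring

/-- The integral remainder `∫₀¹ (1 - t) (d²/dt²) p(a + t (x - a)) dt` of the first-order Taylor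
expansion of `p` at `a`. -/
def taylorRemainder (a : σ → ℝ) (p : MvPolynomial σ ℝ) : MvPolynomial σ ℝ :=
  Polynomial.taylorIntegral (Polynomial.derivative (Polynomial.derivative (restrictSegment a p)))

def firstOrderTaylor [Fintype σ] (a : σ → R) (p : MvPolynomial σ R) : MvPolynomial σ R :=
  C (eval a p) + ∑ i, C (eval a (pderiv i p)) * (X i - C (a i))

theorem firstOrderTaylor_add_taylorRemainder [Fintype σ] (a : σ → ℝ) (p : MvPolynomial σ ℝ) :
    firstOrderTaylor a p + taylorRemainder a p = p := by
  conv_rhs => rw [← eval_one_restrictSegment a p, Polynomial.eval_one_eq_add_taylorIntegral]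
  rw [firstOrderTaylor, taylorRemainder, eval_zero_restrictSegment, derivative_restrictSegment,
    Polynomial.eval_finsetSum]
  simp [eval_zero_restrictSegment]

theorem isSumSq_taylorRemainder [Fintype σ] {ι : Type*} [Fintype ι] (a : σ → ℝ)
    {p : MvPolynomial σ ℝ} (H : ι → σ → MvPolynomial σ ℝ)
    (hH : ∀ i j, pderiv i (pderiv j p) = ∑ k, H k i * H k j) :
    IsSumSq (taylorRemainder a p) := by
  rw [taylorRemainder, derivative_derivative_restrictSegment a H hH, map_sum]
  exact IsSumSq.sum fun _ _ => Polynomial.isSumSq_taylorIntegral_mul_self _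

theorem totalDegree_firstOrderTaylor_le [Fintype σ] [Nontrivial R] (a : σ → R)
    (p : MvPolynomial σ R) : (firstOrderTaylor a p).totalDegree ≤ p.totalDegree := by
  by_cases hp : p.totalDegree = 0
  · rw [totalDegree_eq_zero_iff_eq_C] at hp
    rw [hp]
    simp [firstOrderTaylor]
  have affine : (firstOrderTaylor a p).totalDegree ≤ 1 := by
    refine (totalDegree_add _ _).trans (max_le (by simp) ?_)
    refine (totalDegree_finsetSum _ _).trans (Finset.sup_le fun i _ => ?_)
    rw [C_mul']
    refine (totalDegree_smul_le _ _).trans ?_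
    exact (totalDegree_sub_C_le _ _).trans (totalDegree_X i).le
  omega

theorem totalDegree_taylorRemainder_le [Fintype σ] (a : σ → ℝ) (p : MvPolynomial σ ℝ) :
    (taylorRemainder a p).totalDegree ≤ p.totalDegree := by
  rw [eq_sub_of_add_eq' (firstOrderTaylor_add_taylorRemainder a p)]
  exact (totalDegree_sub _ _).trans (max_le le_rfl (totalDegree_firstOrderTaylor_le a p))

theorem map_firstOrderTaylor [Fintype σ] (L : MvPolynomial σ R →ₗ[R] R) (hL1 : L 1 = 1)
    (p : MvPolynomial σ R) :
    L (firstOrderTaylor (fun i => L (X i)) p) = eval (fun i => L (X i)) p := by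
  have map_C (c : R) : L (C c) = c := by rw [C_eq_smul_one, map_smul, hL1, smul_eq_mul, mul_one]
  simp [firstOrderTaylor, C_mul', map_C]

end MvPolynomial

end

/-- Extended Jensen's inequality for s.o.s-convex polynomials: if `L` is a linear
functional with `L 1 = 1` that is nonnegative on sums of squares of degree at most `2d`,
then `L h ≥ h(L x₁, …, L xₘ)` for every s.o.s-convex `h` of degree at most `2d`. -/
theorem jensen_sosConvex (m d : ℕ) (h : MvPolynomial (Fin m) ℝ)
    (hdeg : h.totalDegree ≤ 2 * d) (hsc : SosConvex h)
    (L : MvPolynomial (Fin m) ℝ →ₗ[ℝ] ℝ) (hL1 : L 1 = 1)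
    (hLsos : ∀ σ : MvPolynomial (Fin m) ℝ, IsSumSq σ → σ.totalDegree ≤ 2 * d → 0 ≤ L σ) :
    eval (fun i => L (X i)) h ≤ L h := by
  obtain ⟨_, H, hH⟩ := hsc
  set a : Fin m → ℝ := fun i => L (X i)
  have remainder_nonneg : 0 ≤ L (taylorRemainder a h) :=
    hLsos _ (isSumSq_taylorRemainder a H hH) ((totalDegree_taylorRemainder_le a h).trans hdeg)
  calc eval a h = L (firstOrderTaylor a h) := (map_firstOrderTaylor L hL1 h).symm
    _ ≤ L (firstOrderTaylor a h) + L (taylorRemainder a h) :=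
      le_add_of_nonneg_right remainder_nonneg
    _ = L h := by rw [← map_add, firstOrderTaylor_add_taylorRemainder]
end

section
/- If the Slater condition holds (there exists u ∈ ℝ^m with p(u,y) < 0 for all y ∈ Y and ψ_j(u) < 0 for all j), then C_1 + C_2 is closed, i.e., the SCCCQ holds. -/
/-!
Let `aⱼ + bⱼ → (w, v)` with `aⱼ ∈ C₁` certified by a finite measure `μⱼ` on `Y` and `bⱼ ∈ C₂` by
multipliers `ηⱼ ≥ 0`. Adding the two conjugate inequalities at the Slater point `u`, whose
constraint values are at most `-ε`, gives `ε (μⱼ(Y) + ∑ ηⱼ) ≤ vⱼ - ⟪wⱼ, u⟫`, so masses and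
multipliers stay bounded; testing at `0` and `±eᵢ` then bounds `aⱼ`. By Prokhorov's theorem the
measures of bounded mass carried by the compact `Y` form a compact set, so `μⱼ`, `ηⱼ`, `aⱼ` have
limits along a common ultrafilter, and the conjugate inequalities survive the limit because each
`p x` is continuous on `Y`.
-/

open MeasureTheory Pointwise Filter Set Topology

lemma IsCompact.exists_tendsto_of_eventually_mem {X ι : Type*} [TopologicalSpace X] {K : Set X}
    (hK : IsCompact K) (U : Ultrafilter ι) {f : ι → X} (hf : ∀ᶠ i in (U : Filter ι), f i ∈ K) :
    ∃ x ∈ K, Tendsto f U (𝓝 x) :=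
  hK.ultrafilter_le_nhds' (U.map f) hf

lemma IsCompact.exists_pos_forall_le_neg {X : Type*} [TopologicalSpace X] {K : Set X}
    (hK : IsCompact K) {f : X → ℝ} (hf : ContinuousOn f K) (hneg : ∀ x ∈ K, f x < 0) :
    ∃ ε > 0, ∀ x ∈ K, f x ≤ -ε := by
  rcases K.eq_empty_or_nonempty with rfl | hne
  · exact ⟨1, one_pos, by simp⟩
  obtain ⟨x₀, hx₀, hmax⟩ := hK.exists_isMaxOn hne hf
  exact ⟨-f x₀, neg_pos.2 (hneg x₀ hx₀), fun x hx => by simpa using hmax hx⟩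

lemma IsCompact.exists_boundedContinuousFunction_eqOn {X : Type*} [TopologicalSpace X]
    {K : Set X} (hK : IsCompact K) {f : X → ℝ} (hf : Continuous f) :
    ∃ g : BoundedContinuousFunction X ℝ, EqOn g f K := by
  obtain ⟨C, hC⟩ := hK.exists_bound_of_continuousOn hf.continuousOn
  let clamp : ℝ → ℝ := fun t => max (-|C|) (min |C| t)
  have hclamp : ∀ t, |clamp t| ≤ |C| := fun t =>
    abs_le.2 ⟨le_max_left _ _, max_le (by simp) (min_le_left _ _)⟩
  refine ⟨.mkOfBound ⟨fun x => clamp (f x), by fun_prop⟩ (2 * |C|) fun x y => ?_,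
    fun x hx => ?_⟩
  · change |clamp (f x) - clamp (f y)| ≤ 2 * |C|
    linarith [abs_sub (clamp (f x)) (clamp (f y)), hclamp (f x), hclamp (f y)]
  · have hfx := abs_le.1 ((hC x hx).trans (le_abs_self C))
    exact (congrArg _ (min_eq_right hfx.2)).trans (max_eq_right hfx.1)

section ConcentratedMeasure

variable {X : Type*} [MeasurableSpace X] {Y : Set X} {μ : Measure X} {f : X → ℝ}

lemma integrable_of_measure_compl_eq_zero [TopologicalSpace X] [OpensMeasurableSpace X]
    [IsFiniteMeasure μ] (hY : IsCompact Y) (hμY : μ Yᶜ = 0) (hf : Continuous f) :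
    Integrable f μ := by
  obtain ⟨C, hC⟩ := hY.exists_bound_of_continuousOn hf.continuousOn
  refine .mono' (integrable_const C) hf.aestronglyMeasurable ?_
  filter_upwards [mem_ae_iff.2 hμY] with y hy using hC y hy

lemma integral_le_of_measure_compl_eq_zero [IsFiniteMeasure μ] (hμY : μ Yᶜ = 0)
    (hf : Integrable f μ) {c : ℝ} (h : ∀ y ∈ Y, f y ≤ c) : ∫ y, f y ∂μ ≤ c * μ.real univ := by
  calc ∫ y, f y ∂μ ≤ ∫ _, c ∂μ :=
        integral_mono_ae hf (integrable_const c) (by filter_upwards [mem_ae_iff.2 hμY] using h)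
    _ = c * μ.real univ := by rw [integral_const, smul_eq_mul, mul_comm]

lemma abs_integral_le_of_measure_compl_eq_zero [IsFiniteMeasure μ] (hμY : μ Yᶜ = 0) {C : ℝ}
    (h : ∀ y ∈ Y, |f y| ≤ C) : |∫ y, f y ∂μ| ≤ C * μ.real univ :=
  norm_integral_le_of_norm_le_const (f := f) (by filter_upwards [mem_ae_iff.2 hμY] using h)

lemma MeasureTheory.FiniteMeasure.tendsto_integral_of_measure_compl_eq_zero [TopologicalSpace X]
    [OpensMeasurableSpace X] {ι : Type*} {F : Filter ι} {μs : ι → FiniteMeasure X}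
    {μ : FiniteMeasure X} (hY : IsCompact Y) (hμs : ∀ i, (μs i : Measure X) Yᶜ = 0)
    (hμ : (μ : Measure X) Yᶜ = 0) (hlim : Tendsto μs F (𝓝 μ)) (hf : Continuous f) :
    Tendsto (fun i => ∫ y, f y ∂(μs i : Measure X)) F (𝓝 (∫ y, f y ∂(μ : Measure X))) := by
  obtain ⟨g, hg⟩ := hY.exists_boundedContinuousFunction_eqOn hf
  have hfg : ∀ ν : Measure X, ν Yᶜ = 0 → ∫ y, f y ∂ν = ∫ y, g y ∂ν := fun ν hν =>
    integral_congr_ae (by filter_upwards [mem_ae_iff.2 hν] with y hy using (hg hy).symm)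
  simp only [hfg _ (hμs _), hfg _ hμ]
  exact FiniteMeasure.tendsto_iff_forall_integral_tendsto.1 hlim g

end ConcentratedMeasure

section EpiConjugate

variable {m : ℕ}

/-- `a ∈ epi g*`, i.e. `g* a.1 ≤ a.2`, stated without extended reals. -/
def MemEpiConjugate (g : (Fin m → ℝ) → ℝ) (a : (Fin m → ℝ) × ℝ) : Prop :=
  ∀ x, ∑ i, a.1 i * x i - g x ≤ a.2

variable {g h : (Fin m → ℝ) → ℝ} {a b : (Fin m → ℝ) × ℝ}

lemma MemEpiConjugate.add (ha : MemEpiConjugate g a) (hb : MemEpiConjugate h b) :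
    MemEpiConjugate (g + h) (a + b) := fun x => by
  have := add_le_add (ha x) (hb x)
  simp only [Prod.fst_add, Prod.snd_add, Pi.add_apply, add_mul, Finset.sum_add_distrib]
  linarith

lemma MemEpiConjugate.mem_Icc (ha : MemEpiConjugate g a) {G : (Fin m → ℝ) → ℝ}
    (hg : ∀ x, |g x| ≤ G x) {V : ℝ} (hV : a.2 ≤ V) :
    a ∈ Icc (fun i => -(V + G (-Pi.single i 1)), -G 0) (fun i => V + G (Pi.single i 1), V) := by
  have hdot : ∀ x, ∑ i, a.1 i * x i = a.1 ⬝ᵥ x := fun _ => rfl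
  refine ⟨⟨fun i => ?_, ?_⟩, ⟨fun i => ?_, hV⟩⟩
  · have := ha (-Pi.single i 1)
    rw [hdot, dotProduct_neg, dotProduct_single_one] at this
    linarith [abs_le.1 (hg (-Pi.single i 1))]
  · have := ha 0
    rw [hdot, dotProduct_zero] at this
    linarith [abs_le.1 (hg 0)]
  · have := ha (Pi.single i 1)
    rw [hdot, dotProduct_single_one] at this
    linarith [abs_le.1 (hg (Pi.single i 1))]

lemma MemEpiConjugate.of_tendsto {ι : Type*} {F : Filter ι} [F.NeBot]
    {as : ι → (Fin m → ℝ) × ℝ} {gs : ι → (Fin m → ℝ) → ℝ} (has : Tendsto as F (𝓝 a))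
    (hgs : ∀ x, Tendsto (fun i => gs i x) F (𝓝 (g x))) (h : ∀ i, MemEpiConjugate (gs i) (as i)) :
    MemEpiConjugate g a := fun x =>
  le_of_tendsto_of_tendsto'
    ((((by fun_prop : Continuous fun a : (Fin m → ℝ) × ℝ => ∑ i, a.1 i * x i).tendsto a).comp
      has).sub (hgs x))
    ((continuous_snd.tendsto a).comp has) fun i => h i x

end EpiConjugate

section Slater

variable {X : Type*} {m s : ℕ} {Y : Set X} {p : (Fin m → ℝ) → X → ℝ}
  {ψ : Fin s → (Fin m → ℝ) → ℝ} {u : Fin m → ℝ} {ε : ℝ}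

lemma exists_slater_margin [TopologicalSpace X] (hY : IsCompact Y) (hpu : Continuous (p u))
    (hpY : ∀ y ∈ Y, p u y < 0) (hψ : ∀ k, ψ k u < 0) :
    ∃ ε > 0, (∀ y ∈ Y, p u y ≤ -ε) ∧ ∀ k, ψ k u ≤ -ε := by
  obtain ⟨ε₁, hε₁, hp⟩ := hY.exists_pos_forall_le_neg hpu.continuousOn hpY
  obtain ⟨ε₂, hε₂, hψ⟩ := isCompact_univ.exists_pos_forall_le_neg
    (continuous_of_discreteTopology (f := fun k => ψ k u)).continuousOn fun k _ => hψ k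
  refine ⟨min ε₁ ε₂, lt_min hε₁ hε₂, fun y hy => ?_, fun k => ?_⟩
  · exact (hp y hy).trans (neg_le_neg (min_le_left _ _))
  · exact (hψ k (mem_univ k)).trans (neg_le_neg (min_le_right _ _))

lemma slater_mass_bound [MeasurableSpace X] {μ : Measure X} [IsFiniteMeasure μ]
    (hμY : μ Yᶜ = 0) (hint : Integrable (p u) μ) {η : Fin s → ℝ} (hη : ∀ k, 0 ≤ η k)
    (hpε : ∀ y ∈ Y, p u y ≤ -ε) (hψε : ∀ k, ψ k u ≤ -ε) {a b : (Fin m → ℝ) × ℝ}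
    (ha : MemEpiConjugate (fun x => ∫ y, p x y ∂μ) a)
    (hb : MemEpiConjugate (fun x => ∑ k, η k * ψ k x) b) :
    ε * (μ.real univ + ∑ k, η k) ≤ (a + b).2 - ∑ i, (a + b).1 i * u i := by
  have hp := integral_le_of_measure_compl_eq_zero hμY hint hpε
  have hψ : ∑ k, η k * ψ k u ≤ -ε * ∑ k, η k := by
    rw [Finset.mul_sum]
    exact Finset.sum_le_sum fun k _ => by nlinarith [hη k, hψε k]
  have := ha.add hb u
  simp only [Pi.add_apply] at this
  linarith

lemma eventually_bounded_of_tendsto_add [MeasurableSpace X] [TopologicalSpace X]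
    [OpensMeasurableSpace X] (hY : IsCompact Y) (hp : ∀ x, Continuous (p x)) (hε : 0 < ε)
    (hpε : ∀ y ∈ Y, p u y ≤ -ε) (hψε : ∀ k, ψ k u ≤ -ε) {ι : Type*} {F : Filter ι}
    {μ : ι → Measure X} [∀ i, IsFiniteMeasure (μ i)] (hμY : ∀ i, μ i Yᶜ = 0)
    {η : ι → Fin s → ℝ} (hη : ∀ i k, 0 ≤ η i k) {a b : ι → (Fin m → ℝ) × ℝ}
    (ha : ∀ i, MemEpiConjugate (fun x => ∫ y, p x y ∂μ i) (a i))
    (hb : ∀ i, MemEpiConjugate (fun x => ∑ k, η i k * ψ k x) (b i)) {wv : (Fin m → ℝ) × ℝ}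
    (hlim : Tendsto (fun i => a i + b i) F (𝓝 wv)) :
    ∃ M : NNReal, ∃ A : Set ((Fin m → ℝ) × ℝ), IsCompact A ∧
      ∀ᶠ i in F, (μ i).real univ ≤ M ∧ η i ∈ Icc 0 (fun _ => (M : ℝ)) ∧ a i ∈ A := by
  set K := wv.2 - ∑ j, wv.1 j * u j + 1
  have hK : ∀ᶠ i in F, (a i + b i).2 - ∑ j, (a i + b i).1 j * u j < K :=
    (((by fun_prop : Continuous fun q : (Fin m → ℝ) × ℝ => q.2 - ∑ j, q.1 j * u j).tendsto
      wv).comp hlim).eventually_lt_const (lt_add_one _)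
  have hV : ∀ᶠ i in F, (a i + b i).2 < wv.2 + 1 :=
    ((continuous_snd.tendsto wv).comp hlim).eventually_lt_const (lt_add_one _)
  choose C hC using fun x => hY.exists_bound_of_continuousOn (hp x).continuousOn
  set M := Real.toNNReal (K / ε)
  set G : (Fin m → ℝ) → ℝ := fun x => |C x| * M
  set V := wv.2 + 1 + M * ∑ k, |ψ k 0|
  refine ⟨M, Icc (fun j => -(V + G (-Pi.single j 1)), -G 0) (fun j => V + G (Pi.single j 1), V),
    isCompact_Icc, (hK.and hV).mono fun i ⟨hKi, hVi⟩ => ?_⟩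
  have hslater := slater_mass_bound (hμY i)
    (integrable_of_measure_compl_eq_zero hY (hμY i) (hp u)) (hη i) hpε hψε (ha i) (hb i)
  have hηsum : 0 ≤ ∑ k, η i k := Finset.sum_nonneg fun k _ => hη i k
  have hsum : (μ i).real univ + ∑ k, η i k ≤ M :=
    ((le_div_iff₀' hε).2 (by linarith)).trans (Real.le_coe_toNNReal _)
  have hmass : (μ i).real univ ≤ M := by linarith
  have hηM : ∀ k, η i k ≤ M := fun k =>
    (Finset.single_le_sum (fun k _ => hη i k) (Finset.mem_univ k)).trans
      (by linarith [measureReal_nonneg (μ := μ i) (s := univ)])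
  refine ⟨hmass, ⟨hη i, hηM⟩, (ha i).mem_Icc (fun x => ?_) ?_⟩
  · exact (abs_integral_le_of_measure_compl_eq_zero (hμY i) fun y hy =>
      (hC x y hy).trans (le_abs_self _)).trans (mul_le_mul_of_nonneg_left hmass (abs_nonneg _))
  · have hb0 := hb i 0
    have hψ0 : ∑ k, η i k * ψ k 0 ≤ M * ∑ k, |ψ k 0| := by
      rw [Finset.mul_sum]
      exact Finset.sum_le_sum fun k _ =>
        (mul_le_mul_of_nonneg_left (le_abs_self _) (hη i k)).trans
          (mul_le_mul_of_nonneg_right (hηM k) (abs_nonneg _))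
    simp only [Pi.zero_apply, mul_zero, Finset.sum_const_zero, zero_sub] at hb0
    simp only [Prod.snd_add] at hVi
    linarith

end Slater

theorem slater_implies_scccq_general (m n s : ℕ)
    (Y : Set (Fin n → ℝ)) (hY : IsCompact Y)
    (p : (Fin m → ℝ) → (Fin n → ℝ) → ℝ)
    (hpcont : ∀ x, Continuous (p x))
    (ψ : Fin s → (Fin m → ℝ) → ℝ)
    (hslater : ∃ u : Fin m → ℝ, (∀ y ∈ Y, p u y < 0) ∧ ∀ j, ψ j u < 0)
    (C1 C2 : Set ((Fin m → ℝ) × ℝ))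
    (hC1 : C1 = {wv | ∃ μ : Measure (Fin n → ℝ), IsFiniteMeasure μ ∧ μ Yᶜ = 0 ∧
        ∀ x : Fin m → ℝ, (∑ i, wv.1 i * x i) - (∫ y, p x y ∂μ) ≤ wv.2})
    (hC2 : C2 = {wv | ∃ η : Fin s → ℝ, (∀ j, 0 ≤ η j) ∧
        ∀ x : Fin m → ℝ, (∑ i, wv.1 i * x i) - (∑ j, η j * ψ j x) ≤ wv.2}) :
    IsClosed (C1 + C2) := by
  subst hC1 hC2
  obtain ⟨u, hpu, hψu⟩ := hslater
  obtain ⟨ε, hε, hpε, hψε⟩ := exists_slater_margin hY (hpcont u) hpu hψu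
  refine IsSeqClosed.isClosed fun q wv hq hlim => ?_
  choose a ha b hb hab using fun j => Set.mem_add.1 (hq j)
  choose μ hμfin hμY hμ using ha
  choose η hη0 hη using hb
  let ν j : FiniteMeasure (Fin n → ℝ) := ⟨μ j, hμfin j⟩
  -- limits along an ultrafilter finer than `atTop` replace the extraction of subsequences
  let U := Ultrafilter.of (atTop : Filter ℕ)
  have hlimU : Tendsto (fun j => a j + b j) U (𝓝 wv) := by
    simpa only [hab] using hlim.mono_left (Ultrafilter.of_le _)
  obtain ⟨M, A, hA, hbdd⟩ := eventually_bounded_of_tendsto_add (a := a) (b := b)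
    hY hpcont hε hpε hψε hμY hη0 hμ hη hlimU
  obtain ⟨ν₀, ⟨-, hν₀Y⟩, hνlim⟩ := (isCompact_setOfPred_finiteMeasure_le_of_isCompact M hY)
    |>.exists_tendsto_of_eventually_mem U (f := ν) <| hbdd.mono fun j hj =>
      ⟨NNReal.coe_le_coe.1 hj.1, (FiniteMeasure.null_iff_toMeasure_null _ _).2 (hμY j)⟩
  rw [FiniteMeasure.null_iff_toMeasure_null] at hν₀Y
  obtain ⟨a₀, -, halim⟩ := hA.exists_tendsto_of_eventually_mem U (hbdd.mono fun j hj => hj.2.2)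
  obtain ⟨η₀, hη₀, hηlim⟩ :=
    isCompact_Icc.exists_tendsto_of_eventually_mem U (hbdd.mono fun j hj => hj.2.1)
  refine ⟨a₀, ⟨ν₀, inferInstance, hν₀Y, ?_⟩, wv - a₀, ⟨η₀, hη₀.1, ?_⟩, add_sub_cancel _ _⟩
  · exact MemEpiConjugate.of_tendsto halim (fun x =>
      FiniteMeasure.tendsto_integral_of_measure_compl_eq_zero (μs := ν) hY hμY hν₀Y hνlim
        (hpcont x)) hμ
  · refine MemEpiConjugate.of_tendsto (as := b) (by simpa using hlimU.sub halim) (fun x => ?_) hη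
    exact tendsto_finsetSum _ fun k _ =>
      ((continuous_apply k).tendsto _ |>.comp hηlim).mul_const _

/-- The Slater condition implies the SCCCQ: `C₁ + C₂` is closed. -/
theorem slater_implies_scccq (m n s : ℕ)
    (Y : Set (Fin n → ℝ)) (hY : IsCompact Y)
    (p : (Fin m → ℝ) → (Fin n → ℝ) → ℝ)
    (hpconv : ∀ y ∈ Y, ConvexOn ℝ Set.univ fun x => p x y)
    (hpcont : ∀ x, Continuous (p x))
    (ψ : Fin s → (Fin m → ℝ) → ℝ)
    (hψcont : ∀ j, Continuous (ψ j)) (hψconv : ∀ j, ConvexOn ℝ Set.univ (ψ j))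
    (hslater : ∃ u : Fin m → ℝ, (∀ y ∈ Y, p u y < 0) ∧ ∀ j, ψ j u < 0)
    (C1 C2 : Set ((Fin m → ℝ) × ℝ))
    (hC1 : C1 = {wv | ∃ μ : Measure (Fin n → ℝ), IsFiniteMeasure μ ∧ μ Yᶜ = 0 ∧
        ∀ x : Fin m → ℝ, (∑ i, wv.1 i * x i) - (∫ y, p x y ∂μ) ≤ wv.2})
    (hC2 : C2 = {wv | ∃ η : Fin s → ℝ, (∀ j, 0 ≤ η j) ∧
        ∀ x : Fin m → ℝ, (∑ i, wv.1 i * x i) - (∑ j, η j * ψ j x) ≤ wv.2}) :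
    IsClosed (C1 + C2) :=
  slater_implies_scccq_general m n s Y hY p hpcont ψ hslater C1 C2 hC1 hC2
end
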